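/- For every natural number n, ∑_{k=0}^{2n} (-1/2)^k · binom(2k,k) · binom(2n,k) · (3·H_k - 2·H_{2k}) = (1/4)^n · binom(2n,n) · H_n. -/

import Mathlib

/-!
Let `t k = (-1/2)^k C(2k, k)`, `S m = ∑ₖ t k C(m, k)` and `T m = ∑ₖ t k C(m, k) h k` with
`h k = 3 H_k - 2 H_{2k}`. Creative telescoping with the certificate `G k = -k² t k C(m+2, k)`
gives `(m+2) S(m+2) = (m+1) S m`, hence the Reed–Dawson evaluation `S(2n) = 4⁻ⁿ C(2n, n)`.
Multiplying that certificate by `h k` and correcting it by `2k t k C(m+1, k)` yields the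
inhomogeneous recurrence `(m+2)² T(m+2) = (m+2)(m+1) T m + 2(m+1) S m`, whose solution with
`T 0 = 0` is `T(2n) = 4⁻ⁿ C(2n, n) H_n`.
-/

/-- The `n`-th harmonic number `H_n = 1 + 1/2 + ⋯ + 1/n` (with `H_0 = 0`). -/
noncomputable def H (n : ℕ) : ℝ := ∑ i ∈ Finset.range n, 1 / ((i : ℝ) + 1)

open Finset

lemma H_succ (n : ℕ) : H (n + 1) = H n + 1 / ((n : ℝ) + 1) :=
  sum_range_succ _ _

lemma cast_choose_succ_right_eq (m k : ℕ) :
    ((k : ℝ) + 1) * (m.choose (k + 1) : ℝ) = ((m : ℝ) - k) * (m.choose k : ℝ) := by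
  rcases le_or_gt k m with hk | hk
  · have h := congrArg (Nat.cast (R := ℝ)) (Nat.choose_succ_right_eq m k)
    push_cast [Nat.cast_sub hk] at h
    linarith
  · simp [Nat.choose_eq_zero_of_lt hk, Nat.choose_eq_zero_of_lt (Nat.lt_succ_of_lt hk)]

lemma cast_choose_mul_succ_eq (m k : ℕ) :
    ((m : ℝ) + 1 - k) * ((m + 1).choose k : ℝ) = ((m : ℝ) + 1) * (m.choose k : ℝ) := by
  rcases le_or_gt k (m + 1) with hk | hk
  · have h := congrArg (Nat.cast (R := ℝ)) (Nat.choose_mul_succ_eq m k)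
    push_cast [Nat.cast_sub hk] at h
    linarith
  · simp [Nat.choose_eq_zero_of_lt hk, Nat.choose_eq_zero_of_lt (Nat.lt_of_succ_lt hk)]

lemma cast_succ_mul_centralBinom_succ (k : ℕ) :
    ((k : ℝ) + 1) * ((2 * k + 2).choose (k + 1) : ℝ) = 2 * (2 * k + 1) * ((2 * k).choose k : ℝ) := by
  exact_mod_cast Nat.succ_mul_centralBinom_succ k

noncomputable def centralTerm (k : ℕ) : ℝ := (-(1 / 2) : ℝ) ^ k * ((2 * k).choose k : ℝ)

lemma add_one_mul_centralTerm_succ (k : ℕ) :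
    ((k : ℝ) + 1) * centralTerm (k + 1) = -(2 * (k : ℝ) + 1) * centralTerm k := by
  rw [centralTerm, centralTerm, pow_succ, show 2 * (k + 1) = 2 * k + 2 by ring]
  linear_combination (-(1 / 2) : ℝ) ^ k * (-(1 / 2) : ℝ) * cast_succ_mul_centralBinom_succ k

noncomputable def harmonicWeight (k : ℕ) : ℝ := 3 * H k - 2 * H (2 * k)

lemma harmonicWeight_succ_sub_mul (k : ℕ) :
    (harmonicWeight (k + 1) - harmonicWeight k) * (((k : ℝ) + 1) * (2 * k + 1)) = 2 * k := by
  rw [harmonicWeight, harmonicWeight, show 2 * (k + 1) = 2 * k + 1 + 1 by ring,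
    H_succ, H_succ, H_succ]
  push_cast
  field_simp
  ring

noncomputable def reedDawsonCert (N k : ℕ) : ℝ := -(k : ℝ) ^ 2 * centralTerm k * (N.choose k : ℝ)

lemma reedDawsonCert_succ_sub (m k : ℕ) :
    ((m : ℝ) + 2) ^ 2 * (centralTerm k * ((m + 2).choose k : ℝ))
      - ((m : ℝ) + 2) * ((m : ℝ) + 1) * (centralTerm k * (m.choose k : ℝ))
    = reedDawsonCert (m + 2) (k + 1) - reedDawsonCert (m + 2) k := by
  have ht := add_one_mul_centralTerm_succ k
  have hc := cast_choose_succ_right_eq (m + 2) k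
  have hc₂ := cast_choose_mul_succ_eq (m + 1) k
  have hc₁ := cast_choose_mul_succ_eq m k
  push_cast at hc hc₂ hc₁
  unfold reedDawsonCert
  push_cast
  linear_combination ((k : ℝ) + 1) * ((m + 2).choose (k + 1) : ℝ) * ht
    - (2 * (k : ℝ) + 1) * centralTerm k * hc + ((m : ℝ) + 2) * centralTerm k * hc₁
    + ((m : ℝ) + 1 - k) * centralTerm k * hc₂

noncomputable def harmonicCert (m k : ℕ) : ℝ :=
  harmonicWeight k * reedDawsonCert (m + 2) k + 2 * k * centralTerm k * ((m + 1).choose k : ℝ)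

lemma harmonicCert_succ_sub (m k : ℕ) :
    ((m : ℝ) + 2) ^ 2 * (centralTerm k * ((m + 2).choose k : ℝ) * harmonicWeight k)
      - ((m : ℝ) + 2) * ((m : ℝ) + 1) * (centralTerm k * (m.choose k : ℝ) * harmonicWeight k)
      - 2 * ((m : ℝ) + 1) * (centralTerm k * (m.choose k : ℝ))
    = harmonicCert m (k + 1) - harmonicCert m k := by
  have hrd := reedDawsonCert_succ_sub m k
  have ht := add_one_mul_centralTerm_succ k
  have hw := harmonicWeight_succ_sub_mul k
  have hc := congrArg (Nat.cast (R := ℝ)) (Nat.add_one_mul_choose_eq m k)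
  have hpascal : ((m + 2).choose (k + 1) : ℝ) = (m + 1).choose k + (m + 1).choose (k + 1) := by
    exact_mod_cast Nat.choose_succ_succ (m + 1) k
  push_cast at hc
  unfold harmonicCert
  unfold reedDawsonCert at hrd ⊢
  push_cast at hrd ⊢
  linear_combination harmonicWeight k * hrd
    + ((harmonicWeight (k + 1) - harmonicWeight k) * ((k : ℝ) + 1) * ((m + 2).choose (k + 1) : ℝ)
      - 2 * ((m + 1).choose (k + 1) : ℝ)) * ht
    - centralTerm k * ((m + 2).choose (k + 1) : ℝ) * hw - 2 * k * centralTerm k * hpascal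
    - 2 * centralTerm k * hc

noncomputable def reedDawsonSum (m : ℕ) : ℝ :=
  ∑ k ∈ range (m + 1), centralTerm k * (m.choose k : ℝ)

noncomputable def harmonicReedDawsonSum (m : ℕ) : ℝ :=
  ∑ k ∈ range (m + 1), centralTerm k * (m.choose k : ℝ) * harmonicWeight k

lemma reedDawsonSum_add_two (m : ℕ) :
    ((m : ℝ) + 2) * reedDawsonSum (m + 2) = ((m : ℝ) + 1) * reedDawsonSum m := by
  have telescope : ∑ k ∈ range (m + 2 + 1),
      (((m : ℝ) + 2) ^ 2 * (centralTerm k * ((m + 2).choose k : ℝ))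
        - ((m : ℝ) + 2) * ((m : ℝ) + 1) * (centralTerm k * (m.choose k : ℝ))) = 0 := by
    rw [sum_congr rfl fun k _ => reedDawsonCert_succ_sub m k, sum_range_sub]
    simp [reedDawsonCert]
  have shrink : ∑ k ∈ range (m + 3), centralTerm k * (m.choose k : ℝ) = reedDawsonSum m :=
    eventually_constant_sum (fun k hk => by simp [Nat.choose_eq_zero_of_lt hk]) (by omega)
  rw [sum_sub_distrib, ← mul_sum, ← mul_sum, shrink, ← reedDawsonSum] at telescope
  apply mul_left_cancel₀ (show (m : ℝ) + 2 ≠ 0 by positivity)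
  linear_combination telescope

lemma harmonicReedDawsonSum_add_two (m : ℕ) :
    ((m : ℝ) + 2) ^ 2 * harmonicReedDawsonSum (m + 2)
      = ((m : ℝ) + 2) * ((m : ℝ) + 1) * harmonicReedDawsonSum m
        + 2 * ((m : ℝ) + 1) * reedDawsonSum m := by
  have telescope : ∑ k ∈ range (m + 2 + 1),
      (((m : ℝ) + 2) ^ 2 * (centralTerm k * ((m + 2).choose k : ℝ) * harmonicWeight k)
        - ((m : ℝ) + 2) * ((m : ℝ) + 1) * (centralTerm k * (m.choose k : ℝ) * harmonicWeight k)
        - 2 * ((m : ℝ) + 1) * (centralTerm k * (m.choose k : ℝ))) = 0 := by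
    rw [sum_congr rfl fun k _ => harmonicCert_succ_sub m k, sum_range_sub]
    simp [harmonicCert, reedDawsonCert, Nat.choose_eq_zero_of_lt]
  have shrink : ∑ k ∈ range (m + 3), centralTerm k * (m.choose k : ℝ) = reedDawsonSum m :=
    eventually_constant_sum (fun k hk => by simp [Nat.choose_eq_zero_of_lt hk]) (by omega)
  have shrinkH : ∑ k ∈ range (m + 3), centralTerm k * (m.choose k : ℝ) * harmonicWeight k
      = harmonicReedDawsonSum m :=
    eventually_constant_sum (fun k hk => by simp [Nat.choose_eq_zero_of_lt hk]) (by omega)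
  rw [sum_sub_distrib, sum_sub_distrib, ← mul_sum, ← mul_sum, ← mul_sum, shrink, shrinkH,
    ← harmonicReedDawsonSum] at telescope
  linear_combination telescope

lemma reedDawsonSum_two_mul (n : ℕ) :
    reedDawsonSum (2 * n) = (1 / 4 : ℝ) ^ n * ((2 * n).choose n : ℝ) := by
  induction n with
  | zero => simp [reedDawsonSum, centralTerm]
  | succ n ih =>
    have hrec := reedDawsonSum_add_two (2 * n)
    rw [ih] at hrec
    rw [show 2 * (n + 1) = 2 * n + 2 by ring]
    apply mul_left_cancel₀ (show (n : ℝ) + 1 ≠ 0 by positivity)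
    push_cast at hrec
    linear_combination hrec / 2 - (1 / 4 : ℝ) ^ (n + 1) * cast_succ_mul_centralBinom_succ n

theorem stmt_2 (n : ℕ) :
    ∑ k ∈ Finset.range (2 * n + 1),
      (-(1/2) : ℝ) ^ k * ((2 * k).choose k : ℝ) * ((2 * n).choose k : ℝ)
        * (3 * H k - 2 * H (2 * k))
    = (1/4 : ℝ) ^ n * ((2 * n).choose n : ℝ) * H n := by
  change harmonicReedDawsonSum (2 * n) = _
  induction n with
  | zero => simp [harmonicReedDawsonSum, harmonicWeight, H]
  | succ n ih =>
    have hrec := harmonicReedDawsonSum_add_two (2 * n)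
    rw [ih, reedDawsonSum_two_mul] at hrec
    push_cast at hrec
    rw [show 2 * (n + 1) = 2 * n + 2 by ring, H_succ]
    field_simp
    apply mul_left_cancel₀ (show 4 * ((n : ℝ) + 1) ≠ 0 by positivity)
    linear_combination hrec - (1 / 4 : ℝ) ^ n * (H n * (n + 1) + 1) * cast_succ_mul_centralBinom_succ n
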